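/- arXiv:2406.00401 — 2 statements merged into one kernel-verified Lean document; each statement's English description precedes it below -/
import Mathlib

section
/- The cube hypergraph Q³(2) (on 9 vertices) contains no loose Hamilton path. -/
/-- An edge of the 3-uniform cube hypergraph `Q³(d)`: a set of 3 pairwise
distinct sequences in `{0,1,2}^d` that agree on all but one coordinate. -/
def cubeEdge (d : ℕ) (e : Finset (Fin d → Fin 3)) : Prop :=
  e.card = 3 ∧ ∃ i : Fin d, ∀ u ∈ e, ∀ v ∈ e, ∀ j : Fin d, j ≠ i → u j = v j

/-- The line in the 3×3 grid where coordinate `k` equals `a`. -/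
def gridLine (k : Fin 2) (a : Fin 3) : Finset (Fin 2 → Fin 3) :=
  Finset.univ.filter (fun p => p k = a)

lemma gridLine_card (k : Fin 2) (a : Fin 3) : (gridLine k a).card = 3 := by
  revert k a; decide

lemma gridLine_meet (k k' : Fin 2) (a a' : Fin 3) (h : k ≠ k') :
    ∃ p, p ∈ gridLine k a ∧ p ∈ gridLine k' a' := by
  revert k k' a a'; decide

lemma gridLine_inj (k : Fin 2) (a a' : Fin 3) (h : gridLine k a = gridLine k a') :
    a = a' := by
  revert k a a'; decide

lemma cubeEdge_line {e : Finset (Fin 2 → Fin 3)} (h : cubeEdge 2 e) :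
    ∃ k a, e = gridLine k a := by
  obtain ⟨hc, i, hi⟩ := h
  obtain ⟨u, hu⟩ : e.Nonempty := by rw [← Finset.card_pos, hc]; norm_num
  have hi2 := i.isLt
  set k : Fin 2 := ⟨1 - i.val, by omega⟩ with hk
  have hki : k ≠ i := by
    refine Fin.ne_of_val_ne ?_
    simp only [hk]
    omega
  refine ⟨k, u k, ?_⟩
  have hsub : e ⊆ gridLine k (u k) := by
    intro w hw
    simp only [gridLine, Finset.mem_filter, Finset.mem_univ, true_and]
    exact hi w hw u hu k hki
  exact Finset.eq_of_subset_of_card_le hsub (by rw [hc, gridLine_card])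

theorem no_loose_hamilton_path_dim_two :
    ¬ ∃ (v : Fin 9 → (Fin 2 → Fin 3)) (e : Fin 4 → Finset (Fin 2 → Fin 3)),
      Function.Injective v ∧ Function.Surjective v ∧
      Function.Injective e ∧ (∀ i, cubeEdge 2 (e i)) ∧
      ∀ i : Fin 4, e i = {v ⟨2 * (i : ℕ), by have := i.isLt; omega⟩,
        v ⟨2 * (i : ℕ) + 1, by have := i.isLt; omega⟩,
        v ⟨2 * (i : ℕ) + 2, by have := i.isLt; omega⟩} := by
  rintro ⟨v, e, hv, hsv, he, hce, hpath⟩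
  choose k a hka using fun i => cubeEdge_line (hce i)
  -- disjointness of e 0 and e 2, and of e 1 and e 3
  have hdisj02 : ∀ p, p ∈ e 0 → p ∈ e 2 → False := by
    intro p hp0 hp2
    rw [hpath 0] at hp0
    rw [hpath 2] at hp2
    simp only [Finset.mem_insert, Finset.mem_singleton] at hp0 hp2
    rcases hp0 with h | h | h <;> rcases hp2 with h' | h' | h' <;>
      exact absurd (hv (h ▸ h')) (by decide)
  have hdisj13 : ∀ p, p ∈ e 1 → p ∈ e 3 → False := by
    intro p hp0 hp2
    rw [hpath 1] at hp0
    rw [hpath 3] at hp2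
    simp only [Finset.mem_insert, Finset.mem_singleton] at hp0 hp2
    rcases hp0 with h | h | h <;> rcases hp2 with h' | h' | h' <;>
      exact absurd (hv (h ▸ h')) (by decide)
  -- same direction for e 0, e 2 and for e 1, e 3
  have hk02 : k 0 = k 2 := by
    by_contra h
    obtain ⟨p, hp, hp'⟩ := gridLine_meet (k 0) (k 2) (a 0) (a 2) h
    exact hdisj02 p (by rw [hka 0]; exact hp) (by rw [hka 2]; exact hp')
  have hk13 : k 1 = k 3 := by
    by_contra h
    obtain ⟨p, hp, hp'⟩ := gridLine_meet (k 1) (k 3) (a 1) (a 3) h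
    exact hdisj13 p (by rw [hka 1]; exact hp) (by rw [hka 3]; exact hp')
  -- e 0 and e 1 share the vertex v 2
  have hshare : v ⟨2, by omega⟩ ∈ e 0 ∧ v ⟨2, by omega⟩ ∈ e 1 := by
    constructor
    · rw [hpath 0]; simp
    · rw [hpath 1]; simp
  -- different directions for e 0 and e 1
  have hk01 : k 0 ≠ k 1 := by
    intro h
    by_cases ha : a 0 = a 1
    · have : e 0 = e 1 := by rw [hka 0, hka 1, h, ha]
      exact absurd (he this) (by decide)
    · have h0 := hshare.1; have h1 := hshare.2
      rw [hka 0] at h0; rw [hka 1] at h1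
      simp only [gridLine, Finset.mem_filter] at h0 h1
      rw [h] at h0
      exact ha (h0.2 ▸ h1.2 ▸ rfl)
  -- distinct constants
  have ha02 : a 0 ≠ a 2 := by
    intro h
    have h02 : e 0 = e 2 := by rw [hka 0, hka 2, hk02, h]
    exact absurd (he h02) (by decide)
  have ha13 : a 1 ≠ a 3 := by
    intro h
    have h13 : e 1 = e 3 := by rw [hka 1, hka 3, hk13, h]
    exact absurd (he h13) (by decide)
  -- pick values avoided by the lines
  obtain ⟨x, hx0, hx2⟩ : ∃ x : Fin 3, x ≠ a 0 ∧ x ≠ a 2 := by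
    revert ha02; generalize a 0 = b; generalize a 2 = c; revert b c; decide
  obtain ⟨y, hy1, hy3⟩ : ∃ y : Fin 3, y ≠ a 1 ∧ y ≠ a 3 := by
    revert ha13; generalize a 1 = b; generalize a 3 = c; revert b c; decide
  -- the point missed by all four lines
  set p : Fin 2 → Fin 3 := fun j => if j = k 0 then x else y with hp
  have hpk0 : p (k 0) = x := by simp [hp]
  have hpk1 : p (k 1) = y := by simp [hp, (Ne.symm hk01)]
  -- p is covered by some edge
  obtain ⟨m, hm⟩ := hsv p
  have hmem : ∀ m : Fin 9, ∃ i : Fin 4, v m ∈ e i := by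
    intro m
    fin_cases m
    · exact ⟨0, by rw [hpath 0]; simp⟩
    · exact ⟨0, by rw [hpath 0]; simp⟩
    · exact ⟨0, by rw [hpath 0]; simp⟩
    · exact ⟨1, by rw [hpath 1]; simp⟩
    · exact ⟨1, by rw [hpath 1]; simp⟩
    · exact ⟨2, by rw [hpath 2]; simp⟩
    · exact ⟨2, by rw [hpath 2]; simp⟩
    · exact ⟨3, by
        rw [hpath 3]
        exact Finset.mem_insert_of_mem (Finset.mem_insert_self _ _)⟩
    · exact ⟨3, by
        rw [hpath 3]
        exact Finset.mem_insert_of_mem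
          (Finset.mem_insert_of_mem (Finset.mem_singleton_self _))⟩
  obtain ⟨i, hi⟩ := hmem m
  rw [hm] at hi
  rw [hka i] at hi
  simp only [gridLine, Finset.mem_filter, Finset.mem_univ, true_and] at hi
  fin_cases i
  · have hi' : p (k 0) = a 0 := hi
    exact hx0 (hpk0 ▸ hi')
  · have hi' : p (k 1) = a 1 := hi
    exact hy1 (hpk1 ▸ hi')
  · have hi' : p (k 2) = a 2 := hi
    rw [← hk02] at hi'
    exact hx2 (hpk0 ▸ hi')
  · have hi' : p (k 3) = a 3 := hi
    rw [← hk13] at hi'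
    exact hy3 (hpk1 ▸ hi')
end

section
/- The cube hypergraph Q³(4) is loose Hamilton connected: for any two distinct vertices a, b ∈ {0,1,2}^4 there exists a loose Hamilton path in Q³(4) from a to b covering all 81 vertices. -/
/-- A loose Hamilton path in `Q³(d)` from `a` to `b`. -/
def looseHamPath (d : ℕ) (a b : Fin d → Fin 3) : Prop :=
  ∃ (ℓ : ℕ) (v : Fin (2 * ℓ + 1) → (Fin d → Fin 3))
    (e : Fin ℓ → Finset (Fin d → Fin 3)),
    Function.Injective v ∧ Function.Surjective v ∧
    v 0 = a ∧ v (Fin.last (2 * ℓ)) = b ∧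
    Function.Injective e ∧ (∀ i, cubeEdge d (e i)) ∧
    ∀ i : Fin ℓ, e i = {v ⟨2 * (i : ℕ), by have := i.isLt; omega⟩,
      v ⟨2 * (i : ℕ) + 1, by have := i.isLt; omega⟩,
      v ⟨2 * (i : ℕ) + 2, by have := i.isLt; omega⟩}

/-!
The map permuting the symbols `0, 1, 2` independently in each coordinate and the maps permuting
the coordinates send cube edges to cube edges, hence loose Hamilton paths to loose Hamilton paths.
Together they act transitively on ordered pairs of vertices at a given Hamming distance, so it
suffices to exhibit, for each `k = 1, …, 4`, one loose Hamilton path from `0` to a vertex at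
distance `k`; these four paths were found by computer search and are checked by `decide`.
-/

open Equiv Finset

theorem cubeEdge_triple {d : ℕ} {x y z : Fin d → Fin 3}
    (hxy : x ≠ y) (hxz : x ≠ z) (hyz : y ≠ z) (c : Fin d)
    (h : ∀ j ≠ c, x j = y j ∧ x j = z j) : cubeEdge d {x, y, z} := by
  refine ⟨card_eq_three.mpr ⟨x, y, z, hxy, hxz, hyz, rfl⟩, c, ?_⟩
  intro u hu v hv j hj
  simp only [mem_insert, mem_singleton] at hu hv
  obtain ⟨hy, hz⟩ := h j hj
  rcases hu with rfl | rfl | rfl <;> rcases hv with rfl | rfl | rfl <;> grind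

theorem looseHamPath_of_bijective {d ℓ : ℕ} {a b : Fin d → Fin 3}
    (v : Fin (2 * ℓ + 1) → Fin d → Fin 3) (hv : Function.Bijective v) (h0 : v 0 = a)
    (hlast : v (Fin.last (2 * ℓ)) = b)
    (hline : ∀ i : Fin ℓ, ∃ c, ∀ j ≠ c,
      v ⟨2 * i, by omega⟩ j = v ⟨2 * i + 1, by omega⟩ j ∧
      v ⟨2 * i, by omega⟩ j = v ⟨2 * i + 2, by omega⟩ j) :
    looseHamPath d a b := by
  have hne {m n : ℕ} (hm : m < 2 * ℓ + 1) (hn : n < 2 * ℓ + 1) (hmn : m ≠ n) :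
      v ⟨m, hm⟩ ≠ v ⟨n, hn⟩ := fun h => hmn (Fin.mk.inj_iff.mp (hv.1 h))
  let e (i : Fin ℓ) : Finset (Fin d → Fin 3) :=
    {v ⟨2 * i, by omega⟩, v ⟨2 * i + 1, by omega⟩, v ⟨2 * i + 2, by omega⟩}
  refine ⟨ℓ, v, e, hv.1, hv.2, h0, hlast, fun i j hij => ?_, fun i => ?_, fun i => rfl⟩
  · -- the middle vertex of an edge has odd index, so it lies in no other edge
    have hmid : v ⟨2 * i + 1, by omega⟩ ∈ e j := hij ▸ by simp [e]
    simp only [e, mem_insert, mem_singleton] at hmid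
    rcases hmid with h | h | h <;> exact Fin.ext (by have := Fin.mk.inj_iff.mp (hv.1 h); omega)
  · obtain ⟨c, hc⟩ := hline i
    exact cubeEdge_triple (hne _ _ (by omega)) (hne _ _ (by omega)) (hne _ _ (by omega)) c hc

/-- The sequence of vertices whose base-3 codes `∑ j, x j * 3 ^ j` are listed in `L`. -/
def decodeCodes {d ℓ : ℕ} (L : List (Fin (3 ^ d))) (hlen : L.length = 2 * ℓ + 1) :
    Fin (2 * ℓ + 1) → Fin d → Fin 3 :=
  fun i => finFunctionFinEquiv.symm L[i.cast hlen.symm]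

theorem decodeCodes_bijective {d ℓ : ℕ} (L : List (Fin (3 ^ d))) (hlen : L.length = 2 * ℓ + 1)
    (hcard : 2 * ℓ + 1 = 3 ^ d) (hnd : L.Nodup) : Function.Bijective (decodeCodes L hlen) := by
  refine (Fintype.bijective_iff_injective_and_card _).mpr ⟨fun i j hij => ?_, by simp [hcard]⟩
  exact Fin.ext (Fin.mk.inj_iff.mp (hnd.get_inj_iff.mp (finFunctionFinEquiv.symm.injective hij)))

theorem cubeEdge.image {d : ℕ} {e : Finset (Fin d → Fin 3)} (he : cubeEdge d e)
    (f : (Fin d → Fin 3) ≃ (Fin d → Fin 3)) (τ : Perm (Fin d))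
    (hf : ∀ u v j, u j = v j → f u (τ j) = f v (τ j)) : cubeEdge d (e.image f) := by
  obtain ⟨hcard, i, hi⟩ := he
  refine ⟨by rw [card_image_of_injective _ f.injective, hcard], τ i, ?_⟩
  simp only [mem_image]
  rintro _ ⟨u, hu, rfl⟩ _ ⟨v, hv, rfl⟩ j hj
  rw [← τ.apply_symm_apply j]
  exact hf u v _ (hi u hu v hv _ fun h => hj (τ.symm_apply_eq.mp h))

theorem looseHamPath.map {d : ℕ} {a b : Fin d → Fin 3} (h : looseHamPath d a b)
    (f : (Fin d → Fin 3) ≃ (Fin d → Fin 3)) (τ : Perm (Fin d))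
    (hf : ∀ u v j, u j = v j → f u (τ j) = f v (τ j)) : looseHamPath d (f a) (f b) := by
  obtain ⟨ℓ, v, e, hvi, hvs, hv0, hvl, hei, hce, hev⟩ := h
  refine ⟨ℓ, f ∘ v, fun i => (e i).image f, f.injective.comp hvi, f.surjective.comp hvs,
    congrArg f hv0, congrArg f hvl, fun i j hij => hei (image_injective f.injective hij),
    fun i => (hce i).image f τ hf, fun i => ?_⟩
  simp only [hev i, image_insert, image_singleton, Function.comp_apply]

theorem looseHamPath.comp_perm {d : ℕ} {a b : Fin d → Fin 3} (h : looseHamPath d a b)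
    (π : Perm (Fin d)) : looseHamPath d (a ∘ π) (b ∘ π) :=
  h.map (π.symm.arrowCongr (Equiv.refl _)) π.symm fun u v j huv => by simpa using huv

theorem exists_perm_fin_three (w p q : Fin 3) (h : w ≠ 0 → p ≠ q) :
    ∃ s : Perm (Fin 3), s 0 = p ∧ (w ≠ 0 → s w = q) := by
  decide +revert

theorem looseHamPath_of_zero_of_ne_iff {d : ℕ} {a b c : Fin d → Fin 3}
    (hc : looseHamPath d 0 c) (hsupp : ∀ i, c i ≠ 0 ↔ a i ≠ b i) : looseHamPath d a b := by
  choose σ hσ0 hσc using fun i => exists_perm_fin_three (c i) (a i) (b i) (hsupp i).mp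
  have ha : piCongrRight σ 0 = a := funext hσ0
  have hb : piCongrRight σ c = b := funext fun i => by
    by_cases hci : c i = 0
    · have hab : a i = b i := not_not.mp fun hab => (hsupp i).mpr hab hci
      simp [hci, hσ0, hab]
    · exact hσc i hci
  simpa [ha, hb] using hc.map (piCongrRight σ) 1 fun u v j huv => by simp [huv]

theorem looseHamPath_of_zero_of_hammingDist_eq {d : ℕ} {a b c : Fin d → Fin 3}
    (hc : looseHamPath d 0 c) (hdist : hammingDist a b = hammingDist 0 c) :
    looseHamPath d a b := by
  obtain ⟨π, hπ⟩ := Perm.exists_map_finset_eq {i | (0 : Fin d → Fin 3) i ≠ c i}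
    {i | a i ≠ b i} hdist.symm
  refine looseHamPath_of_zero_of_ne_iff (hc.comp_perm π.symm) fun i => ?_
  have hmem := congrArg (i ∈ ·) hπ
  simp only [mem_map_equiv, mem_filter, mem_univ, true_and, eq_iff_iff] at hmem
  simpa [eq_comm] using hmem

theorem looseHamPath_zero_dist_one : looseHamPath 4 0 ![1, 0, 0, 0] :=
  looseHamPath_of_bijective _ (decodeCodes_bijective (ℓ := 40)
    [0, 27, 54, 63, 72, 45, 18, 19, 20, 11, 2, 56, 29, 47, 38, 41, 44, 43, 42, 36, 39, 30, 48,
      50, 49, 52, 46, 37, 28, 31, 34, 33, 35, 62, 8, 17, 26, 53, 80, 74, 77, 75, 76, 79, 73, 64,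
      55, 61, 58, 57, 59, 32, 5, 14, 23, 22, 21, 3, 12, 9, 15, 6, 24, 51, 78, 60, 69, 70, 71, 65,
      68, 66, 67, 40, 13, 10, 16, 25, 7, 4, 1]
    rfl rfl (by decide)) (by decide) (by decide) (by decide)

theorem looseHamPath_zero_dist_two : looseHamPath 4 0 ![1, 1, 0, 0] :=
  looseHamPath_of_bijective _ (decodeCodes_bijective (ℓ := 40)
    [0, 3, 6, 15, 24, 21, 18, 20, 19, 25, 22, 76, 49, 40, 31, 30, 32, 41, 50, 53, 47, 29, 38, 11,
      65, 68, 71, 44, 17, 26, 8, 2, 5, 23, 14, 13, 12, 39, 66, 75, 57, 58, 59, 56, 62, 61, 60,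
      69, 78, 79, 80, 77, 74, 73, 72, 54, 63, 9, 36, 27, 45, 48, 51, 42, 33, 35, 34, 52, 43, 16,
      70, 67, 64, 10, 37, 46, 28, 55, 1, 7, 4]
    rfl rfl (by decide)) (by decide) (by decide) (by decide)

theorem looseHamPath_zero_dist_three : looseHamPath 4 0 ![1, 1, 1, 0] :=
  looseHamPath_of_bijective _ (decodeCodes_bijective (ℓ := 40)
    [0, 2, 1, 55, 28, 29, 27, 45, 36, 63, 9, 11, 10, 37, 64, 67, 70, 79, 61, 7, 34, 35, 33, 6,
      60, 54, 57, 58, 59, 56, 62, 80, 71, 65, 68, 14, 41, 38, 44, 43, 42, 69, 15, 16, 17, 8, 26,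
      25, 24, 51, 78, 72, 75, 76, 77, 23, 50, 53, 47, 74, 20, 18, 19, 73, 46, 52, 49, 40, 31, 32,
      30, 48, 39, 66, 12, 21, 3, 5, 4, 22, 13]
    rfl rfl (by decide)) (by decide) (by decide) (by decide)

theorem looseHamPath_zero_dist_four : looseHamPath 4 0 ![1, 1, 1, 1] :=
  looseHamPath_of_bijective _ (decodeCodes_bijective (ℓ := 40)
    [0, 18, 9, 36, 63, 65, 64, 67, 70, 61, 79, 73, 76, 22, 49, 50, 48, 51, 45, 46, 47, 29, 38,
      41, 44, 71, 17, 14, 11, 2, 20, 23, 26, 53, 80, 74, 77, 68, 59, 62, 56, 54, 55, 28, 1, 19,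
      10, 13, 16, 25, 7, 8, 6, 24, 15, 42, 69, 60, 78, 72, 75, 57, 66, 39, 12, 21, 3, 5, 4, 58,
      31, 32, 30, 27, 33, 35, 34, 52, 43, 37, 40]
    rfl rfl (by decide)) (by decide) (by decide) (by decide)

theorem exists_looseHamPath_four_zero_hammingDist_eq {k : ℕ} (hk : 0 < k) (hk4 : k ≤ 4) :
    ∃ c : Fin 4 → Fin 3, hammingDist 0 c = k ∧ looseHamPath 4 0 c := by
  interval_cases k
  · exact ⟨_, by decide, looseHamPath_zero_dist_one⟩
  · exact ⟨_, by decide, looseHamPath_zero_dist_two⟩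
  · exact ⟨_, by decide, looseHamPath_zero_dist_three⟩
  · exact ⟨_, by decide, looseHamPath_zero_dist_four⟩

theorem dim_four_loose_hamilton_connected :
    ∀ a b : Fin 4 → Fin 3, a ≠ b → looseHamPath 4 a b := by
  intro a b hab
  obtain ⟨c, hc, hpath⟩ := exists_looseHamPath_four_zero_hammingDist_eq
    (hammingDist_pos.mpr hab) (hammingDist_le_card_fintype.trans_eq (Fintype.card_fin 4))
  exact looseHamPath_of_zero_of_hammingDist_eq hpath hc.symm
end
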